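/- For every level n of the Calkin-Wilf tree, the sum of all fractions at that level equals the sum of the values of the Minkowski question mark function applied to those fractions: ∑_{r ∈ F_n} r = ∑_{r ∈ F_n} ?(r). -/

import Mathlib

/-- Level `n+1` (in the paper's 1-based numbering) of the Calkin–Wilf tree:
`cwLevel 0 = [(1,1)]`, and each pair `(a,b)` is replaced by `(a,a+b), (a+b,b)`
in order to pass to the next level. -/
def cwLevel : ℕ → List (ℕ × ℕ)
  | 0 => [(1, 1)]
  | n + 1 => (cwLevel n).flatMap fun p => [(p.1, p.1 + p.2), (p.1 + p.2, p.2)]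
/-- The canonical continued fraction expansion `[a₀; a₁, ..., a_m]` of `a/b`,
computed by the Euclidean algorithm. -/
def cfNat : ℕ → ℕ → List ℕ
  | _, 0 => []
  | a, b + 1 => (a / (b + 1)) :: cfNat (b + 1) (a % (b + 1))
  termination_by a b => b
  decreasing_by exact Nat.lt_succ_iff.mpr (Nat.lt_succ_iff.mp (Nat.mod_lt _ (Nat.succ_pos b)))

/-- The Minkowski question mark function on (positive) rationals: if
`r = [a₀; a₁, ..., a_m]` is the continued fraction expansion of `r`, then
`?(r) = a₀ + 2 * ∑_{k=1}^{m} (−1)^{k+1} / 2^{a₁ + ⋯ + a_k}`. -/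
def mink (r : ℚ) : ℚ :=
  match cfNat r.num.toNat r.den with
  | [] => 0
  | _a0 :: rest =>
    (_a0 : ℚ) + 2 * ∑ k ∈ Finset.range rest.length,
      (-1 : ℚ) ^ k / 2 ^ ((rest.take (k + 1)).sum)

/-!
Level `n + 1` of the Calkin–Wilf tree consists of the left children `a / (a + b)` and the right
children `a / b + 1` of the fractions `a / b` of level `n`. Both the identity and `?` satisfy
`f 1 = 1`, `f (x + 1) = f x + 1` and `f (1 - x) = 1 - f x` on `(0, 1)`, and these equations
alone determine the level sums: the right children contribute the previous sum plus `2 ^ n`,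
and since the level is invariant under `(a, b) ↦ (b, a)` the left children pair up as `x` and
`1 - x`, contributing `2 ^ n / 2`. So both sums equal `(3 * 2 ^ n - 1) / 2`.
-/

lemma cfNat_of_pos (a : ℕ) {b : ℕ} (hb : 0 < b) : cfNat a b = (a / b) :: cfNat b (a % b) := by
  obtain ⟨c, rfl⟩ := Nat.exists_eq_add_of_lt hb
  simp [cfNat]

def cfTail : List ℕ → ℚ
  | [] => 0
  | d :: L => (2 - cfTail L) / 2 ^ d

lemma two_mul_sum_eq_cfTail (L : List ℕ) :
    2 * ∑ k ∈ Finset.range L.length, (-1 : ℚ) ^ k / 2 ^ (L.take (k + 1)).sum = cfTail L := by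
  induction L with
  | nil => simp [cfTail]
  | cons d L ih =>
    have shift :
        ∑ k ∈ Finset.range L.length, (-1 : ℚ) ^ (k + 1) / 2 ^ ((d :: L).take (k + 1 + 1)).sum
          = -(∑ k ∈ Finset.range L.length, (-1 : ℚ) ^ k / 2 ^ (L.take (k + 1)).sum) / 2 ^ d := by
      rw [← Finset.sum_neg_distrib, Finset.sum_div]
      refine Finset.sum_congr rfl fun k _ => ?_
      simp only [List.take_succ_cons, List.sum_cons, pow_succ, pow_add]
      ring
    rw [cfTail, ← ih, List.length_cons, Finset.sum_range_succ', shift]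
    simp only [pow_zero, zero_add, List.take_succ_cons, List.take_zero, List.sum_cons,
      List.sum_nil, add_zero, one_div]
    ring

lemma mink_eq_cfTail (r : ℚ) :
    mink r = (r.num.toNat / r.den : ℕ) + cfTail (cfNat r.den (r.num.toNat % r.den)) := by
  rw [mink, cfNat_of_pos _ r.den_pos]
  exact congrArg _ (two_mul_sum_eq_cfTail _)

/- For `a < c` and `q = c / a`, the expansions of `a / (a + c)` and `c / (a + c)` are
`[0; q + 1, L]` and `[0; 1, q, L]`. -/
lemma cfTail_cfNat_add_add_cfTail_cfNat_add_eq_one {a c : ℕ} (ha : 0 < a) (hc : 0 < c) :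
    cfTail (cfNat (a + c) a) + cfTail (cfNat (a + c) c) = 1 := by
  wlog hac : a ≤ c generalizing a c
  · rw [add_comm a c, add_comm]
    exact this hc ha (by omega)
  obtain rfl | hlt := hac.eq_or_lt
  · rw [cfNat_of_pos _ ha, Nat.add_div_right _ ha, Nat.div_self ha, Nat.add_mod_right,
      Nat.mod_self, cfNat]
    norm_num [cfTail]
  · rw [cfNat_of_pos _ ha, cfNat_of_pos _ hc, Nat.add_div_right _ hc, Nat.add_mod_right,
      Nat.div_eq_of_lt hlt, Nat.mod_eq_of_lt hlt, cfNat_of_pos c ha, add_comm a c,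
      Nat.add_div_right _ ha, Nat.add_mod_right]
    simp only [cfTail, pow_succ, zero_add]
    field_simp
    ring

theorem mink_add_one {x : ℚ} (hx : 0 ≤ x) : mink (x + 1) = mink x + 1 := by
  have hden : (x + 1).den = x.den := by exact_mod_cast Rat.add_natCast_den x 1
  have hnum : (x + 1).num = x.num + x.den := by
    rw [← Int.cast_inj (α := ℚ), ← Rat.mul_den_eq_num, hden]
    push_cast
    rw [← Rat.mul_den_eq_num x]
    ring
  have hnum_nonneg : 0 ≤ x.num := Rat.num_nonneg.mpr hx
  rw [mink_eq_cfTail, mink_eq_cfTail, hden, hnum,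
    Int.toNat_add hnum_nonneg (Int.natCast_nonneg _), Int.toNat_natCast,
    Nat.add_div_right _ x.den_pos, Nat.add_mod_right]
  push_cast
  ring

theorem mink_one_sub {x : ℚ} (hx0 : 0 < x) (hx1 : x < 1) : mink (1 - x) = 1 - mink x := by
  have hden : (1 - x).den = x.den := by exact_mod_cast Rat.natCast_sub_den 1 x
  have hnum : (1 - x).num = x.den - x.num := by
    rw [← Int.cast_inj (α := ℚ), ← Rat.mul_den_eq_num, hden]
    push_cast
    rw [← Rat.mul_den_eq_num x]
    ring
  have hpos : 0 < x.num := Rat.num_pos.mpr hx0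
  have hlt : x.num < x.den := Rat.num_lt_denom_iff.mpr hx1
  have hnum_toNat : (1 - x).num.toNat = x.den - x.num.toNat := by omega
  have hsum := cfTail_cfNat_add_add_cfTail_cfNat_add_eq_one (a := x.num.toNat)
    (c := x.den - x.num.toNat) (by omega) (by omega)
  rw [Nat.add_sub_cancel' (by omega)] at hsum
  rw [mink_eq_cfTail, mink_eq_cfTail, hden, hnum_toNat, Nat.div_eq_of_lt (by omega),
    Nat.mod_eq_of_lt (by omega), Nat.div_eq_of_lt (by omega), Nat.mod_eq_of_lt (by omega)]
  push_cast
  linarith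

lemma pos_of_mem_cwLevel {n : ℕ} {p : ℕ × ℕ} (hp : p ∈ cwLevel n) : 0 < p.1 ∧ 0 < p.2 := by
  induction n generalizing p with
  | zero =>
    rw [cwLevel, List.mem_singleton] at hp
    simp [hp]
  | succ n ih =>
    simp only [cwLevel, List.mem_flatMap, List.mem_cons, List.not_mem_nil, or_false] at hp
    obtain ⟨q, hq, rfl | rfl⟩ := hp <;> have := ih hq <;> constructor <;> dsimp only <;> omega

lemma length_cwLevel (n : ℕ) : (cwLevel n).length = 2 ^ n := by
  induction n with
  | zero => rfl
  | succ n ih => simp [cwLevel, List.length_flatMap, ih, pow_succ]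

lemma reverse_cwLevel (n : ℕ) : (cwLevel n).reverse = (cwLevel n).map Prod.swap := by
  induction n with
  | zero => rfl
  | succ n ih =>
    rw [cwLevel, List.reverse_flatMap, ih, List.flatMap_map, List.map_flatMap]
    congr 1
    funext p
    simp [add_comm]

lemma sum_map_cwLevel_succ {M : Type*} [AddCommMonoid M] (g : ℕ × ℕ → M) (n : ℕ) :
    ((cwLevel (n + 1)).map g).sum
      = ((cwLevel n).map fun p => g (p.1, p.1 + p.2) + g (p.1 + p.2, p.2)).sum := by
  simp [cwLevel, List.flatMap, List.sum_flatten, Function.comp_def]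

lemma sum_map_swap_cwLevel {M : Type*} [AddCommMonoid M] (g : ℕ × ℕ → M) (n : ℕ) :
    ((cwLevel n).map fun p => g p.swap).sum = ((cwLevel n).map g).sum := by
  show ((cwLevel n).map (g ∘ Prod.swap)).sum = _
  rw [← List.map_map, ← reverse_cwLevel, List.map_reverse, List.sum_reverse]

structure MinkowskiFunctionalEqns (f : ℚ → ℚ) : Prop where
  map_one : f 1 = 1
  map_add_one : ∀ x, 0 < x → f (x + 1) = f x + 1
  map_one_sub : ∀ x, 0 < x → x < 1 → f (1 - x) = 1 - f x

lemma sum_cwLevel_left_children {f : ℚ → ℚ} (hf : ∀ x, 0 < x → x < 1 → f (1 - x) = 1 - f x)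
    (n : ℕ) : ((cwLevel n).map fun p => f (p.1 / (p.1 + p.2 : ℕ))).sum = 2 ^ n / 2 := by
  have hreflect : ∀ p ∈ cwLevel n, f (p.1 / (p.1 + p.2 : ℕ)) + f (p.2 / (p.2 + p.1 : ℕ)) = 1 := by
    intro p hp
    obtain ⟨h1, h2⟩ := pos_of_mem_cwLevel hp
    have hx1 : (p.1 : ℚ) / (p.1 + p.2 : ℕ) < 1 := by
      rw [div_lt_one (by positivity)]
      exact_mod_cast (by omega : p.1 < p.1 + p.2)
    have hcompl : (p.2 : ℚ) / (p.2 + p.1 : ℕ) = 1 - p.1 / (p.1 + p.2 : ℕ) := by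
      field_simp
      push_cast
      ring
    rw [hcompl, hf _ (by positivity) hx1, add_sub_cancel]
  set S := ((cwLevel n).map fun p => f (p.1 / (p.1 + p.2 : ℕ))).sum
  have hdouble : S + S = 2 ^ n := calc
    S + S = S + ((cwLevel n).map fun p => f (p.2 / (p.2 + p.1 : ℕ))).sum := by
      rw [← sum_map_swap_cwLevel]
      rfl
    _ = ((cwLevel n).map fun _ => (1 : ℚ)).sum := by
      rw [← List.sum_map_add, List.map_congr_left hreflect]
    _ = 2 ^ n := by simp [length_cwLevel]
  linarith

theorem sum_cwLevel_of_minkowskiFunctionalEqns {f : ℚ → ℚ} (hf : MinkowskiFunctionalEqns f)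
    (n : ℕ) : ((cwLevel n).map fun p => f ((p.1 : ℚ) / p.2)).sum = (3 * 2 ^ n - 1) / 2 := by
  induction n with
  | zero => norm_num [cwLevel, hf.map_one]
  | succ n ih =>
    have hright : ∀ p ∈ cwLevel n, f ((p.1 + p.2 : ℕ) / p.2) = f (p.1 / p.2) + 1 := by
      intro p hp
      obtain ⟨h1, h2⟩ := pos_of_mem_cwLevel hp
      rw [← hf.map_add_one _ (by positivity)]
      congr 1
      field_simp
      push_cast
      ring
    rw [sum_map_cwLevel_succ, List.sum_map_add, List.map_congr_left hright, List.sum_map_add,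
      sum_cwLevel_left_children hf.map_one_sub, ih, List.map_const', List.sum_replicate,
      length_cwLevel, nsmul_one]
    push_cast
    ring

theorem minkowskiFunctionalEqns_id : MinkowskiFunctionalEqns fun x => x where
  map_one := rfl
  map_add_one _ _ := rfl
  map_one_sub _ _ _ := rfl

theorem minkowskiFunctionalEqns_mink : MinkowskiFunctionalEqns mink where
  map_one := by simp [mink_eq_cfTail, cfNat, cfTail]
  map_add_one _ hx := mink_add_one hx.le
  map_one_sub _ hx0 hx1 := mink_one_sub hx0 hx1

/-- For every level of the Calkin–Wilf tree, the sum of all fractions at that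
level equals the sum of the values of the Minkowski question mark function at
those fractions. -/
theorem cw_level_sum_eq_sum_mink (n : ℕ) :
    ((cwLevel n).map fun p => (p.1 : ℚ) / p.2).sum
      = ((cwLevel n).map fun p => mink ((p.1 : ℚ) / p.2)).sum :=
  (sum_cwLevel_of_minkowskiFunctionalEqns minkowskiFunctionalEqns_id n).trans
    (sum_cwLevel_of_minkowskiFunctionalEqns minkowskiFunctionalEqns_mink n).symm
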